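/- arXiv:0810.4993 — 2 statements merged into one kernel-verified Lean document; each statement's English description precedes it below -/
import Mathlib

section
/- Let A be the (n_a - 1) × n_a parity check matrix of the q-ary repetition code (rows of the form e_i followed by entry -1 in the last column) and B a parity check matrix of the q-ary Hamming code of length n_b = (q^m - 1)/(q - 1), with 3 ≤ n_a ≤ n_b. Then the code C = ker(A ⊗ B) has covering radius exactly n_a - 1. -/
open Matrix Kronecker

/-- `H` is a parity check matrix of a `q`-ary Hamming code: its columns are,
up to nonzero scalars, exactly all the nonzero vectors of `F_q^m`, each once. -/
def IsHammingPCM {F : Type*} [Field F] {m n : ℕ} (H : Matrix (Fin m) (Fin n) F) : Prop :=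
  ∀ v : Fin m → F, v ≠ 0 → ∃! j : Fin n, ∃ c : F, c ≠ 0 ∧ (fun i => H i j) = c • v

/-!
Write a word `c : Fin na × Fin nb → F` as its rows `curry c j`. The product `(A ⊗ B) c` is `A`
applied to the matrix of row syndromes `B (curry c j)`, so `c` is a codeword iff all its rows
have the same syndrome. Rows with different syndromes differ, and since the Hamming code is
perfect, any row can be moved to any syndrome by changing at most one coordinate. Hence the
distance from `v` to the code is the least number, over syndromes `t`, of rows of `v` whose
syndrome is not `t`. Taking `t` to be the syndrome of one row shows it is at most `na - 1`; it
equals `na - 1` when the rows of `v` have pairwise distinct syndromes, which is possible as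
`na ≤ nb < q ^ m`.
-/

open Function Finset

section HammingDist

variable {ι κ β : Type*} [Fintype ι] [Fintype κ] [DecidableEq β]

theorem hammingDist_eq_sum_hammingDist_curry (v c : ι × κ → β) :
    hammingDist v c = ∑ i, hammingDist (curry v i) (curry c i) := by
  simp only [hammingDist, card_filter, Fintype.sum_prod_type]
  rfl

theorem hammingDist_curry_le (v c : ι × κ → β) :
    hammingDist (curry v) (curry c) ≤ hammingDist v c := by
  rw [hammingDist_eq_sum_hammingDist_curry, hammingDist, card_filter]
  refine sum_le_sum fun i _ => ?_
  split_ifs with h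
  · exact hammingDist_pos.2 h
  · exact Nat.zero_le _

theorem card_filter_ne_le_card_sub_one [DecidableEq ι] (f : ι → β) (i₀ : ι) :
    #{i | f i ≠ f i₀} ≤ Fintype.card ι - 1 := by
  calc #{i | f i ≠ f i₀} ≤ #(univ.erase i₀) :=
        card_le_card fun i hi => mem_erase.2 ⟨fun h => (mem_filter.1 hi).2 (h ▸ rfl), mem_univ i⟩
    _ = Fintype.card ι - 1 := by rw [card_erase_of_mem (mem_univ i₀), card_univ]

theorem card_sub_one_le_card_filter_ne {f : ι → β} (hf : Injective f) (b : β) :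
    Fintype.card ι - 1 ≤ #{i | f i ≠ b} := by
  have hle : #{i | f i = b} ≤ 1 :=
    card_le_one.2 fun i hi j hj => hf ((mem_filter.1 hi).2.trans (mem_filter.1 hj).2.symm)
  have := card_filter_add_card_filter_not (s := univ) (fun i => f i = b)
  rw [card_univ] at this
  simp only [ne_eq]
  omega

end HammingDist

/-- The parity check matrix `[I_{n-1} | -1]` of the repetition code of length `n`. -/
def repetitionPCM (n : ℕ) (R : Type*) [Ring R] : Matrix (Fin (n - 1)) (Fin n) R :=
  of fun i j => if (j : ℕ) = i then 1 else if (j : ℕ) = n - 1 then -1 else 0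

section Repetition

variable {n : ℕ} {R κ : Type*} [Ring R]

theorem repetitionPCM_apply_eq_sub (hn : 0 < n) (i : Fin (n - 1)) :
    repetitionPCM n R i =
      Pi.single (Fin.castLE (Nat.sub_le n 1) i) 1 - Pi.single ⟨n - 1, by omega⟩ 1 := by
  funext j
  have := i.isLt
  simp only [repetitionPCM, of_apply, Pi.sub_apply, Pi.single_apply, Fin.ext_iff, Fin.val_castLE]
  split_ifs <;> first | omega | simp

theorem repetitionPCM_mul_eq_zero_iff (hn : 0 < n) (Z : Matrix (Fin n) κ R) :
    repetitionPCM n R * Z = 0 ↔ ∃ z, ∀ j, Z j = z := by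
  have hrow : ∀ i, (repetitionPCM n R * Z) i =
      Z (Fin.castLE (Nat.sub_le n 1) i) - Z ⟨n - 1, by omega⟩ := by
    intro i
    rw [mul_apply_eq_vecMul, repetitionPCM_apply_eq_sub hn, sub_vecMul, single_one_vecMul,
      single_one_vecMul]
    rfl
  constructor
  · intro h
    refine ⟨Z ⟨n - 1, by omega⟩, fun j => ?_⟩
    by_cases hj : (j : ℕ) = n - 1
    · exact congrArg Z (Fin.ext hj)
    · have hj' := hrow ⟨j, by omega⟩
      rw [h] at hj'
      exact sub_eq_zero.1 hj'.symm
  · rintro ⟨z, hz⟩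
    ext i k
    simp [hrow, hz]

end Repetition

theorem kronecker_mulVec_apply {ι κ μ ν R : Type*} [Fintype ι] [Fintype κ] [CommSemiring R]
    (A : Matrix μ ι R) (B : Matrix ν κ R) (c : ι × κ → R) (i : μ) (k : ν) :
    ((A ⊗ₖ B) *ᵥ c) (i, k) = (A * of fun j => B *ᵥ curry c j) i k := by
  simp only [mulVec, dotProduct, kroneckerMap_apply, mul_apply, of_apply, Fintype.sum_prod_type,
    mul_sum, curry_apply]
  exact sum_congr rfl fun j _ => sum_congr rfl fun l _ => by ring

theorem repetitionPCM_kronecker_mulVec_eq_zero_iff {n : ℕ} {κ ν R : Type*} [Fintype κ]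
    [CommRing R] (hn : 0 < n) (B : Matrix ν κ R) (c : Fin n × κ → R) :
    (repetitionPCM n R ⊗ₖ B) *ᵥ c = 0 ↔ ∃ t, ∀ j, B *ᵥ curry c j = t := by
  refine Iff.trans ?_ (repetitionPCM_mul_eq_zero_iff hn (of fun j => B *ᵥ curry c j))
  constructor
  · intro h
    ext i k
    rw [← kronecker_mulVec_apply, h, Pi.zero_apply, Matrix.zero_apply]
  · intro h
    ext ⟨i, k⟩
    rw [kronecker_mulVec_apply, h, Matrix.zero_apply, Pi.zero_apply]

theorem card_filter_mulVec_curry_ne_le_hammingDist {ι κ μ R : Type*} [Fintype ι] [Fintype κ]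
    [Fintype μ] [Semiring R] [DecidableEq R] (B : Matrix μ κ R) (v c : ι × κ → R) (t : μ → R)
    (hc : ∀ i, B *ᵥ curry c i = t) :
    #{i | B *ᵥ curry v i ≠ t} ≤ hammingDist v c := by
  calc #{i | B *ᵥ curry v i ≠ t} ≤ #{i | curry v i ≠ curry c i} :=
        card_le_card fun i hi => by
          simp only [mem_filter, mem_univ, true_and] at hi ⊢
          exact fun heq => hi (by rw [heq, hc i])
    _ ≤ hammingDist v c := hammingDist_curry_le v c

section Hamming

variable {F : Type*} [Field F] [DecidableEq F] {m n : ℕ} {B : Matrix (Fin m) (Fin n) F}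

theorem IsHammingPCM.exists_hammingNorm_le_one_mulVec_eq (hB : IsHammingPCM B)
    (s : Fin m → F) : ∃ e, B *ᵥ e = s ∧ hammingNorm e ≤ 1 := by
  rcases eq_or_ne s 0 with rfl | hs
  · exact ⟨0, mulVec_zero B, by simp⟩
  obtain ⟨j, ⟨a, ha, hcol⟩, -⟩ := hB s hs
  refine ⟨Pi.single j a⁻¹, ?_, ?_⟩
  · ext k
    have hk : B k j = a * s k := congrFun hcol k
    rw [mulVec_single]
    change B k j * a⁻¹ = s k
    rw [hk]
    field_simp
  · have hsupp : ∀ i, (Pi.single j a⁻¹ : Fin n → F) i ≠ 0 → i = j := fun i h =>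
      by_contra fun hij => h (Pi.single_eq_of_ne (M := fun _ => F) hij _)
    exact card_le_one.2 fun i hi i' hi' =>
      (hsupp i (mem_filter.1 hi).2).trans (hsupp i' (mem_filter.1 hi').2).symm

theorem IsHammingPCM.exists_hammingDist_le_one_mulVec_eq (hB : IsHammingPCM B)
    (x : Fin n → F) (t : Fin m → F) : ∃ y, B *ᵥ y = t ∧ hammingDist x y ≤ 1 := by
  obtain ⟨e, he, hnorm⟩ := hB.exists_hammingNorm_le_one_mulVec_eq (t - B *ᵥ x)
  refine ⟨x + e, by rw [mulVec_add, he, add_sub_cancel], ?_⟩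
  rwa [hammingDist_eq_hammingNorm, neg_add_cancel_left]

theorem IsHammingPCM.exists_forall_mulVec_curry_eq {ι : Type*} [Fintype ι]
    (hB : IsHammingPCM B) (v : ι × Fin n → F) (t : Fin m → F) :
    ∃ c : ι × Fin n → F, (∀ i, B *ᵥ curry c i = t) ∧
      hammingDist v c ≤ #{i | B *ᵥ curry v i ≠ t} := by
  choose y hy hdist using hB.exists_hammingDist_le_one_mulVec_eq
  refine ⟨uncurry fun i => if B *ᵥ curry v i = t then curry v i else y (curry v i) t, ?_, ?_⟩
  · intro i
    simp only [curry_uncurry]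
    split_ifs with h
    exacts [h, hy _ _]
  · rw [hammingDist_eq_sum_hammingDist_curry, card_filter]
    refine sum_le_sum fun i _ => ?_
    simp only [curry_uncurry]
    by_cases h : B *ᵥ curry v i = t
    · rw [if_pos h, if_neg (not_not.2 h), hammingDist_self]
    · rw [if_neg h, if_pos h]
      exact hdist _ _

theorem IsHammingPCM.exists_card_sub_one_le_card_filter_mulVec_curry_ne {ι : Type*} [Fintype ι]
    [Fintype F] (hB : IsHammingPCM B) (hι : Fintype.card ι ≤ Fintype.card F ^ m) :
    ∃ v : ι × Fin n → F, ∀ t, Fintype.card ι - 1 ≤ #{i | B *ᵥ curry v i ≠ t} := by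
  obtain ⟨syndrome⟩ : Nonempty (ι ↪ (Fin m → F)) := Function.Embedding.nonempty_of_card_le
    (by rwa [Fintype.card_fun, Fintype.card_fin])
  choose x hx using fun i => hB.exists_hammingNorm_le_one_mulVec_eq (syndrome i)
  refine ⟨uncurry x, fun t => ?_⟩
  simpa only [curry_uncurry, fun i => (hx i).1] using
    card_sub_one_le_card_filter_ne syndrome.injective t

end Hamming

theorem sSup_sInf_hammingDist_eq {ι β : Type*} [Fintype ι] [DecidableEq β] {C : Set (ι → β)}
    {r : ℕ} (hcover : ∀ v, ∃ c ∈ C, hammingDist v c ≤ r)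
    (hfar : ∃ v, ∀ c ∈ C, r ≤ hammingDist v c) :
    sSup {s | ∃ v, sInf {d | ∃ c, c ∈ C ∧ hammingDist v c = d} = s} = r := by
  have hle : ∀ v, sInf {d | ∃ c, c ∈ C ∧ hammingDist v c = d} ≤ r := fun v => by
    obtain ⟨c, hc, hd⟩ := hcover v
    exact le_trans (Nat.sInf_le ⟨c, hc, rfl⟩) hd
  obtain ⟨v, hv⟩ := hfar
  apply IsGreatest.csSup_eq
  refine ⟨⟨v, (hle v).antisymm (le_csInf ?_ ?_)⟩, ?_⟩
  · obtain ⟨c, hc, -⟩ := hcover v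
    exact ⟨_, c, hc, rfl⟩
  · rintro _ ⟨c, hc, rfl⟩
    exact hv c hc
  · rintro _ ⟨v', rfl⟩
    exact hle v'

theorem kronecker_stmt_15_general {F : Type*} [Field F] [Fintype F] [DecidableEq F]
    {m na nb : ℕ} (hna3 : 3 ≤ na) (hnanb : na ≤ nb)
    (hnb : nb * (Fintype.card F - 1) = Fintype.card F ^ m - 1)
    (B : Matrix (Fin m) (Fin nb) F) (hB : IsHammingPCM B)
    (A : Matrix (Fin (na - 1)) (Fin na) F)
    (hA : ∀ (i : Fin (na - 1)) (j : Fin na),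
      A i j = if (j : ℕ) = (i : ℕ) then 1
        else if (j : ℕ) = na - 1 then -1 else 0) :
    sSup {r : ℕ | ∃ v : Fin na × Fin nb → F,
        sInf {d : ℕ | ∃ c : Fin na × Fin nb → F,
          (A ⊗ₖ B).mulVec c = 0 ∧ hammingDist v c = d} = r} = na - 1 := by
  have hna : 0 < na := by omega
  obtain rfl : A = repetitionPCM na F := Matrix.ext hA
  refine sSup_sInf_hammingDist_eq (C := {c | (repetitionPCM na F ⊗ₖ B) *ᵥ c = 0}) ?_ ?_
  · intro v
    let last : Fin na := ⟨na - 1, by omega⟩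
    obtain ⟨c, hc, hd⟩ := hB.exists_forall_mulVec_curry_eq v (B *ᵥ curry v last)
    refine ⟨c, (repetitionPCM_kronecker_mulVec_eq_zero_iff hna B c).2 ⟨_, hc⟩, hd.trans ?_⟩
    simpa using card_filter_ne_le_card_sub_one (fun i => B *ᵥ curry v i) last
  · have hcard : Fintype.card (Fin na) ≤ Fintype.card F ^ m := by
      have hq : 1 ≤ Fintype.card F - 1 := Nat.le_sub_one_of_lt Fintype.one_lt_card
      have := Nat.le_mul_of_pos_right nb hq
      rw [Fintype.card_fin]
      omega
    obtain ⟨v, hv⟩ := hB.exists_card_sub_one_le_card_filter_mulVec_curry_ne hcard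
    refine ⟨v, fun c hc => ?_⟩
    obtain ⟨t, ht⟩ := (repetitionPCM_kronecker_mulVec_eq_zero_iff hna B c).1 hc
    simpa using (hv t).trans (card_filter_mulVec_curry_ne_le_hammingDist B v c t ht)

/-- With `A = [I_{n_a-1} | -1]` the parity check matrix of the `q`-ary
repetition code of length `n_a` and `B` a Hamming parity check matrix of
length `n_b = (q^m-1)/(q-1)`, `3 ≤ n_a ≤ n_b`, the code `C = ker(A ⊗ B)` has
covering radius exactly `n_a - 1`. -/
theorem kronecker_stmt_15 {F : Type*} [Field F] [Fintype F] [DecidableEq F]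
    {m na nb : ℕ} (hm : 2 ≤ m) (hna3 : 3 ≤ na) (hnanb : na ≤ nb)
    (hnb : nb * (Fintype.card F - 1) = Fintype.card F ^ m - 1)
    (B : Matrix (Fin m) (Fin nb) F) (hB : IsHammingPCM B)
    (A : Matrix (Fin (na - 1)) (Fin na) F)
    (hA : ∀ (i : Fin (na - 1)) (j : Fin na),
      A i j = if (j : ℕ) = (i : ℕ) then 1
        else if (j : ℕ) = na - 1 then -1 else 0) :
    sSup {r : ℕ | ∃ v : Fin na × Fin nb → F,
        sInf {d : ℕ | ∃ c : Fin na × Fin nb → F,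
          (A ⊗ₖ B).mulVec c = 0 ∧ hammingDist v c = d} = r} = na - 1 :=
  kronecker_stmt_15_general hna3 hnanb hnb B hB A hA
end

section
/- Let A = [I_{n_a-1} | -1] (repetition code parity check matrix) and B a Hamming parity check matrix with 3 ≤ n_a ≤ n_b = (q^m-1)/(q-1). The code C = ker(A ⊗ B) has length n_a n_b, dimension n_a n_b - m(n_a - 1), and minimum distance 3. -/
/-
Write a word `x ∈ F^(na × nb)` as blocks `x₀, …, x_{na-1} ∈ F^nb`. The rows of `A ⊗ B` say
exactly that all blocks have the same `B`-syndrome. If this common syndrome is zero, some block is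
a nonzero Hamming codeword, of weight at least `3`; otherwise no block vanishes and the weight is
at least `na ≥ 3`. A weight-`3` Hamming codeword placed in a single block attains `3`. Hamming
codewords have weight at least `3` because the count `nb (q - 1) = q^m - 1` forces the columns of
`B` to be nonzero, and then no two of them are proportional. Finally `B` is onto, since its
columns span `F^m`, hence so is `A ⊗ B`, and rank–nullity gives the dimension.
-/

open Matrix Kronecker

theorem hammingNorm_eq_sum_curry {ι κ β : Type*} [Fintype ι] [Fintype κ] [Zero β]
    [DecidableEq β] (x : ι × κ → β) : hammingNorm x = ∑ i, hammingNorm (Function.curry x i) := by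
  simp only [hammingNorm, Finset.card_filter, Fintype.sum_prod_type]
  rfl

def codewordWeights {R ι κ : Type*} [Semiring R] [DecidableEq R] [Fintype κ]
    (H : Matrix ι κ R) : Set ℕ :=
  {w | ∃ x, H *ᵥ x = 0 ∧ x ≠ 0 ∧ hammingNorm x = w}

namespace IsHammingPCM

variable {F : Type*} [Field F] {m n : ℕ} {B : Matrix (Fin m) (Fin n) F}

theorem mulVecLin_surjective (hB : IsHammingPCM B) : Function.Surjective B.mulVecLin := by
  rw [← LinearMap.range_eq_top, range_mulVecLin, eq_top_iff]
  intro v _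
  rcases eq_or_ne v 0 with rfl | hv
  · exact zero_mem _
  obtain ⟨j, ⟨c, hc, hcol⟩, -⟩ := hB v hv
  change B.col j = c • v at hcol
  rw [← inv_smul_smul₀ hc v, ← hcol]
  exact Submodule.smul_mem _ _ (Submodule.subset_span ⟨j, rfl⟩)

theorem col_ne_zero [Fintype F] [DecidableEq F] (hB : IsHammingPCM B)
    (hn : n * (Fintype.card F - 1) = Fintype.card F ^ m - 1) (j : Fin n) : B.col j ≠ 0 := by
  intro hj
  -- the other `n - 1` columns would have to cover all `q^m - 1` nonzero vectors
  have hcover : Finset.univ.erase (0 : Fin m → F) ⊆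
      (Finset.univ.erase j ×ˢ Finset.univ.erase (0 : F)).image fun p => p.2⁻¹ • B.col p.1 := by
    intro v hv
    obtain ⟨k, ⟨c, hc, hcol⟩, -⟩ := hB v (Finset.ne_of_mem_erase hv)
    change B.col k = c • v at hcol
    have hkj : k ≠ j := by
      rintro rfl
      exact smul_ne_zero hc (Finset.ne_of_mem_erase hv) (hcol.symm.trans hj)
    refine Finset.mem_image.2 ⟨(k, c), by simp [hc, hkj], ?_⟩
    rw [hcol, inv_smul_smul₀ hc]
  have hq : 1 < Fintype.card F := Fintype.one_lt_card
  have hle := (Finset.card_le_card hcover).trans Finset.card_image_le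
  simp only [Finset.card_product, Finset.card_erase_of_mem (Finset.mem_univ _), Finset.card_univ,
    Fintype.card_fun, Fintype.card_fin] at hle
  have : n ≤ n - 1 := Nat.le_of_mul_le_mul_right (hn ▸ hle) (by omega)
  have := j.pos
  omega

theorem eq_of_col_eq_smul (hB : IsHammingPCM B) (hcol : ∀ j, B.col j ≠ 0) {s t : Fin n}
    {c : F} (h : B.col s = c • B.col t) : s = t := by
  have hc : c ≠ 0 := by rintro rfl; exact hcol s (by simpa using h)
  exact (hB _ (hcol t)).unique ⟨c, hc, h⟩ ⟨1, one_ne_zero, (one_smul F _).symm⟩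

variable [DecidableEq F]

theorem three_le_hammingNorm (hB : IsHammingPCM B) (hcol : ∀ j, B.col j ≠ 0)
    {y : Fin n → F} (hy : B *ᵥ y = 0) (hy0 : y ≠ 0) : 3 ≤ hammingNorm y := by
  set S := Finset.univ.filter fun j => y j ≠ 0
  have hsum : ∑ j ∈ S, y j • B.col j = 0 := by
    rw [← hy, mulVec_eq_sum, Finset.sum_filter_of_ne fun j _ h => by contrapose! h; simp [h]]
    simp [col_def]
  have hmem : ∀ j ∈ S, y j ≠ 0 := fun j hj => (Finset.mem_filter.1 hj).2
  have hpos : 0 < S.card := hammingNorm_pos_iff.2 hy0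
  by_contra! h
  change S.card < 3 at h
  interval_cases hcard : S.card
  · obtain ⟨s, hs⟩ := Finset.card_eq_one.1 hcard
    rw [hs, Finset.sum_singleton] at hsum
    exact hcol s ((smul_eq_zero.1 hsum).resolve_left (hmem s (by simp [hs])))
  · obtain ⟨s, t, hst, hs⟩ := Finset.card_eq_two.1 hcard
    rw [hs, Finset.sum_pair hst] at hsum
    have hys : y s ≠ 0 := hmem s (by simp [hs])
    refine hst (hB.eq_of_col_eq_smul hcol (c := -(y s)⁻¹ * y t) ?_)
    rw [← inv_smul_smul₀ hys (B.col s), eq_neg_of_add_eq_zero_left hsum]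
    module

theorem exists_mulVec_eq_zero_hammingNorm_le_three (hB : IsHammingPCM B) (hm : 2 ≤ m) :
    ∃ y : Fin n → F, B *ᵥ y = 0 ∧ y ≠ 0 ∧ hammingNorm y ≤ 3 := by
  set i₀ : Fin m := ⟨0, by omega⟩
  set i₁ : Fin m := ⟨1, hm⟩
  have hi : i₀ ≠ i₁ := by simp [i₀, i₁, Fin.ext_iff]
  set e₀ : Fin m → F := Pi.single i₀ 1
  set e₁ : Fin m → F := Pi.single i₁ 1
  obtain ⟨j₁, ⟨c₁, hc₁, hcol₁⟩, -⟩ := hB e₀ (by simp [e₀])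
  obtain ⟨j₂, ⟨c₂, hc₂, hcol₂⟩, -⟩ := hB e₁ (by simp [e₁])
  obtain ⟨j₃, ⟨c₃, hc₃, hcol₃⟩, -⟩ :=
    hB (e₀ + e₁) fun h => by simpa [e₀, e₁, hi] using congr_fun h i₀
  change B.col _ = _ at hcol₁ hcol₂ hcol₃
  have h₁₂ : j₁ ≠ j₂ := by
    rintro rfl
    simpa [e₀, e₁, hi, hc₁] using congr_fun (hcol₁.symm.trans hcol₂) i₀
  have h₁₃ : j₁ ≠ j₃ := by
    rintro rfl
    simpa [e₀, e₁, hi.symm, hc₃, eq_comm] using congr_fun (hcol₁.symm.trans hcol₃) i₁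
  refine ⟨Pi.single j₁ c₁⁻¹ + Pi.single j₂ c₂⁻¹ - Pi.single j₃ c₃⁻¹, ?_, ?_, ?_⟩
  · simp only [mulVec_sub, mulVec_add, mulVec_single, op_smul_eq_smul, hcol₁, hcol₂, hcol₃,
      inv_smul_smul₀ hc₁, inv_smul_smul₀ hc₂, inv_smul_smul₀ hc₃, sub_self]
  · exact Function.ne_iff.2 ⟨j₁, by simp [h₁₂.symm, h₁₃.symm, hc₁]⟩
  · refine (Finset.card_le_card (t := {j₁, j₂, j₃}) fun u hu => ?_).trans Finset.card_le_three
    simp only [Finset.mem_insert, Finset.mem_singleton]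
    by_contra! h
    simp [h.1, h.2.1, h.2.2] at hu

theorem isLeast_codewordWeights (hB : IsHammingPCM B) (hcol : ∀ j, B.col j ≠ 0)
    (hm : 2 ≤ m) : IsLeast (codewordWeights B) 3 := by
  obtain ⟨y, hy, hy0, hle⟩ := hB.exists_mulVec_eq_zero_hammingNorm_le_three hm
  refine ⟨⟨y, hy, hy0, le_antisymm hle (hB.three_le_hammingNorm hcol hy hy0)⟩, ?_⟩
  rintro w ⟨x, hx, hx0, rfl⟩
  exact hB.three_le_hammingNorm hcol hx hx0

end IsHammingPCM

section Repetition

variable {R : Type*} [CommRing R] {n : ℕ} {A : Matrix (Fin n) (Fin (n + 1)) R}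
  (hA : ∀ i j, A i j = if (j : ℕ) = i then 1 else if (j : ℕ) = n then -1 else 0)
include hA

theorem kronecker_mulVec_of_repetition {ι κ : Type*} [Fintype κ] (B : Matrix ι κ R)
    (x : Fin (n + 1) × κ → R) :
    (A ⊗ₖ B) *ᵥ x = fun p =>
      (B *ᵥ Function.curry x p.1.castSucc - B *ᵥ Function.curry x (Fin.last n)) p.2 := by
  have hA' : ∀ i j,
      A i j = (if j = i.castSucc then 1 else 0) - if j = Fin.last n then 1 else 0 := by
    intro i j
    have := i.isLt
    rw [hA]
    split_ifs <;> simp_all [Fin.ext_iff]; omega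
  ext ⟨i, r⟩
  simp [mulVec, dotProduct, Fintype.sum_prod_type, hA', sub_mul, Finset.sum_sub_distrib, ite_mul]

theorem kronecker_mulVec_eq_zero_iff_of_repetition {ι κ : Type*} [Fintype κ]
    (B : Matrix ι κ R) (x : Fin (n + 1) × κ → R) :
    (A ⊗ₖ B) *ᵥ x = 0 ↔ ∀ j, B *ᵥ Function.curry x j = B *ᵥ Function.curry x (Fin.last n) := by
  rw [kronecker_mulVec_of_repetition hA, Fin.forall_fin_succ', funext_iff, Prod.forall]
  simp [funext_iff, sub_eq_zero]

theorem mulVecLin_kronecker_surjective_of_repetition {ι κ : Type*} [Fintype κ]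
    {B : Matrix ι κ R} (hB : Function.Surjective B.mulVecLin) :
    Function.Surjective (A ⊗ₖ B).mulVecLin := by
  intro t
  choose u hu using fun i => hB (Function.curry t i)
  refine ⟨Function.uncurry (Fin.snoc u 0), ?_⟩
  ext ⟨i, r⟩
  rw [mulVecLin_apply, kronecker_mulVec_of_repetition hA]
  dsimp only
  rw [Function.curry_uncurry, Fin.snoc_castSucc, Fin.snoc_last, mulVec_zero, sub_zero,
    ← mulVecLin_apply, hu]
  rfl

theorem isLeast_codewordWeights_kronecker_repetition [DecidableEq R] {ι κ : Type*} [Fintype κ]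
    {B : Matrix ι κ R} {d : ℕ} (hd : IsLeast (codewordWeights B) d) (hdn : d ≤ n + 1) :
    IsLeast (codewordWeights (A ⊗ₖ B)) d := by
  constructor
  · obtain ⟨y, hyB, hy0, rfl⟩ := hd.1
    have hblock : ∀ j, B *ᵥ (Pi.single 0 y : Fin (n + 1) → κ → R) j = 0 := by
      intro j
      rcases eq_or_ne j 0 with rfl | hj
      · simpa using hyB
      · simp [hj]
    refine ⟨Function.uncurry (Pi.single 0 y), ?_, ?_, ?_⟩
    · simp [kronecker_mulVec_eq_zero_iff_of_repetition hA, hblock]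
    · obtain ⟨s, hs⟩ := Function.ne_iff.1 hy0
      exact Function.ne_iff.2 ⟨(0, s), by simpa using hs⟩
    · rw [hammingNorm_eq_sum_curry, Function.curry_uncurry,
        Fintype.sum_eq_single 0 fun j hj => by simp [hj]]
      simp
  · rintro w ⟨x, hx, hx0, rfl⟩
    rw [kronecker_mulVec_eq_zero_iff_of_repetition hA] at hx
    rw [hammingNorm_eq_sum_curry]
    by_cases hz : B *ᵥ Function.curry x (Fin.last n) = 0
    · obtain ⟨⟨j, s⟩, hjs⟩ := Function.ne_iff.1 hx0
      have hj : Function.curry x j ≠ 0 := fun h => hjs (congr_fun h s)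
      calc d ≤ hammingNorm (Function.curry x j) := hd.2 ⟨_, (hx j).trans hz, hj, rfl⟩
        _ ≤ _ := Finset.single_le_sum (f := fun j => hammingNorm (Function.curry x j))
          (fun _ _ => Nat.zero_le _) (Finset.mem_univ j)
    · have hblock : ∀ j, 1 ≤ hammingNorm (Function.curry x j) := fun j =>
        Nat.one_le_iff_ne_zero.2 fun h =>
          hz (by rw [← hx j, hammingNorm_eq_zero.1 h, mulVec_zero])
      calc d ≤ n + 1 := hdn
        _ = ∑ _j : Fin (n + 1), 1 := by simp
        _ ≤ _ := Finset.sum_le_sum fun j _ => hblock j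

end Repetition

theorem kronecker_stmt_18_general {F : Type*} [Field F] [Fintype F] [DecidableEq F]
    {m na nb : ℕ} (hm : 2 ≤ m) (hna3 : 3 ≤ na)
    (hnb : nb * (Fintype.card F - 1) = Fintype.card F ^ m - 1)
    (B : Matrix (Fin m) (Fin nb) F) (hB : IsHammingPCM B)
    (A : Matrix (Fin (na - 1)) (Fin na) F)
    (hA : ∀ (i : Fin (na - 1)) (j : Fin na),
      A i j = if (j : ℕ) = (i : ℕ) then 1
        else if (j : ℕ) = na - 1 then -1 else 0) :
    Fintype.card (Fin na × Fin nb) = na * nb ∧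
    Module.finrank F (LinearMap.ker (A ⊗ₖ B).mulVecLin) = na * nb - m * (na - 1) ∧
    IsLeast {w : ℕ | ∃ x : Fin na × Fin nb → F,
      (A ⊗ₖ B).mulVec x = 0 ∧ x ≠ 0 ∧ hammingNorm x = w} 3 := by
  obtain ⟨n, rfl⟩ : ∃ n, na = n + 1 := ⟨na - 1, by omega⟩
  -- `n + 1 - 1` reduces to `n`, so `A` is already a matrix with `n` rows
  replace hA : ∀ (i : Fin n) (j : Fin (n + 1)),
      A i j = if (j : ℕ) = i then 1 else if (j : ℕ) = n then -1 else 0 := hA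
  have hsurj := mulVecLin_kronecker_surjective_of_repetition hA hB.mulVecLin_surjective
  have hrank := LinearMap.finrank_range_add_finrank_ker (A ⊗ₖ B).mulVecLin
  rw [LinearMap.range_eq_top.2 hsurj, finrank_top] at hrank
  simp only [Module.finrank_fintype_fun_eq_card, Fintype.card_prod, Fintype.card_fin] at hrank
  refine ⟨by simp, by rw [mul_comm m]; omega, ?_⟩
  exact isLeast_codewordWeights_kronecker_repetition hA
    (hB.isLeast_codewordWeights (hB.col_ne_zero hnb) hm) (by omega)

/-- With `A = [I_{n_a-1} | -1]` the repetition-code parity check matrix and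
`B` a Hamming parity check matrix, `3 ≤ n_a ≤ n_b = (q^m-1)/(q-1)`, the code
`C = ker(A ⊗ B)` has length `n_a n_b`, dimension `n_a n_b - m(n_a - 1)` and
minimum distance `3`. -/
theorem kronecker_stmt_18 {F : Type*} [Field F] [Fintype F] [DecidableEq F]
    {m na nb : ℕ} (hm : 2 ≤ m) (hna3 : 3 ≤ na) (hnanb : na ≤ nb)
    (hnb : nb * (Fintype.card F - 1) = Fintype.card F ^ m - 1)
    (B : Matrix (Fin m) (Fin nb) F) (hB : IsHammingPCM B)
    (A : Matrix (Fin (na - 1)) (Fin na) F)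
    (hA : ∀ (i : Fin (na - 1)) (j : Fin na),
      A i j = if (j : ℕ) = (i : ℕ) then 1
        else if (j : ℕ) = na - 1 then -1 else 0) :
    Fintype.card (Fin na × Fin nb) = na * nb ∧
    Module.finrank F (LinearMap.ker (A ⊗ₖ B).mulVecLin) = na * nb - m * (na - 1) ∧
    IsLeast {w : ℕ | ∃ x : Fin na × Fin nb → F,
      (A ⊗ₖ B).mulVec x = 0 ∧ x ≠ 0 ∧ hammingNorm x = w} 3 :=
  kronecker_stmt_18_general hm hna3 hnb B hB A hA
end
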